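/- Let T be a TT-Rademacher distributed tensor of rank parameter R with mode dimensions d_1, ..., d_N. Then for any two distinct multi-indices (i_1,...,i_N) ≠ (i_1',...,i_N'), the entries T[i_1,...,i_N] and T[i_1',...,i_N'] are uncorrelated: E[T[i_1,...,i_N] · T[i_1',...,i_N']] = 0. -/

import Mathlib

open MeasureTheory ProbabilityTheory

noncomputable section

/-- The law of a Rademacher random variable: `±1` with probability `1/2` each. -/
def rademacherLaw : Measure ℝ :=
  (2⁻¹ : ENNReal) • Measure.dirac 1 + (2⁻¹ : ENNReal) • Measure.dirac (-1)

/-- The sequence of TT-ranks of a TT decomposition with rank parameter `R`: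
the boundary ranks are `1` and all the internal ranks are `R` (so that the core
`G⁽ⁿ⁾` has shape `ttRk n × dₙ × ttRk (n+1)`, i.e. `1 × d₁ × R`, `R × dₙ × R`, …,
`R × d_N × 1`). -/
def ttRk (N R : ℕ) (k : Fin (N + 1)) : ℕ :=
  if k = 0 ∨ k = Fin.last N then 1 else R

/-- The unnormalized `(i₁, …, i_N)` entry of a TT tensor with cores `G⁽ⁿ⁾`:
the scalar matrix product `G⁽¹⁾[:,i₁,:] G⁽²⁾[:,i₂,:] ⋯ G⁽ᴺ⁾[:,i_N,:]`, written
as a sum over all rank paths. -/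
def ttChain {Ω : Type*} [MeasurableSpace Ω] {N R : ℕ} {d : Fin N → ℕ}
    (G : (n : Fin N) → Fin (ttRk N R n.castSucc) → Fin (d n) → Fin (ttRk N R n.succ) → Ω → ℝ)
    (i : (n : Fin N) → Fin (d n)) (ω : Ω) : ℝ :=
  ∑ p : (k : Fin (N + 1)) → Fin (ttRk N R k),
    ∏ n : Fin N, G n (p n.castSucc) (i n) (p n.succ) ω

/-- The `(i₁, …, i_N)` entry of the TT-Rademacher distributed tensor of rank parameter `R`
built from the cores `G⁽ⁿ⁾`:
`T[i₁,…,i_N] = (1/√(R^{N−1})) G⁽¹⁾[:,i₁,:] G⁽²⁾[:,i₂,:] ⋯ G⁽ᴺ⁾[:,i_N,:]`. -/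
def ttEntry {Ω : Type*} [MeasurableSpace Ω] {N R : ℕ} {d : Fin N → ℕ}
    (G : (n : Fin N) → Fin (ttRk N R n.castSucc) → Fin (d n) → Fin (ttRk N R n.succ) → Ω → ℝ)
    (i : (n : Fin N) → Fin (d n)) (ω : Ω) : ℝ :=
  (Real.sqrt (R ^ (N - 1)))⁻¹ * ttChain G i ω

/-- The inner product `⟨T, X⟩` of the TT-Rademacher tensor with a fixed tensor `X`. -/
def ttInner {Ω : Type*} [MeasurableSpace Ω] {N R : ℕ} {d : Fin N → ℕ}
    (G : (n : Fin N) → Fin (ttRk N R n.castSucc) → Fin (d n) → Fin (ttRk N R n.succ) → Ω → ℝ)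
    (X : ((n : Fin N) → Fin (d n)) → ℝ) (ω : Ω) : ℝ :=
  ∑ i : (n : Fin N) → Fin (d n), ttEntry G i ω * X i

/-!
Expanding both entries as sums over rank paths `p`, `q`, the correlation `E[T[i] T[i']]` is a
sum of expectations of products of core entries. Pick a mode `m` with `iₘ ≠ i'ₘ`: the entry
`G⁽ᵐ⁾[pₘ, iₘ, pₘ₊₁]` occurs exactly once in such a product, since the path `q` reads the `m`-th
core at the slice `i'ₘ` and every other factor comes from another core. By independence it
factors out of the expectation, and it has mean zero.
-/

section Rademacher

variable {Ω : Type*} [MeasurableSpace Ω] {μ : Measure Ω} {f : Ω → ℝ}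

lemma integral_id_rademacherLaw : ∫ x, x ∂rademacherLaw = 0 := by
  have hint : ∀ c : ℝ, Integrable (fun x : ℝ => x) ((2⁻¹ : ENNReal) • Measure.dirac c) :=
    fun c => (integrable_dirac enorm_lt_top).smul_measure (by norm_num)
  rw [rademacherLaw, integral_add_measure (hint 1) (hint (-1)), integral_smul_measure,
    integral_smul_measure, integral_dirac, integral_dirac]
  norm_num

lemma ae_abs_le_one_rademacherLaw : ∀ᵐ x ∂rademacherLaw, |x| ≤ 1 := by
  rw [rademacherLaw, ae_add_measure_iff]
  constructor <;> exact Measure.ae_smul_measure (by simp [ae_dirac_eq]) _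

lemma integral_eq_zero_of_map_eq_rademacherLaw (hf : Measurable f)
    (hlaw : μ.map f = rademacherLaw) : ∫ ω, f ω ∂μ = 0 := by
  rw [← integral_id_rademacherLaw, ← hlaw]
  exact (integral_map hf.aemeasurable aestronglyMeasurable_id).symm

lemma ae_abs_le_one_of_map_eq_rademacherLaw (hf : Measurable f)
    (hlaw : μ.map f = rademacherLaw) : ∀ᵐ ω ∂μ, |f ω| ≤ 1 :=
  ae_of_ae_map hf.aemeasurable (hlaw ▸ ae_abs_le_one_rademacherLaw)

end Rademacher

section Products

variable {Ω ι : Type*} [MeasurableSpace Ω] {μ : Measure Ω}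

theorem iIndepFun.integral_prod_eq_zero_of_unique_index {κ : Type*} [Fintype κ]
    {g : ι → Ω → ℝ} (hg : iIndepFun g μ) (hmeas : ∀ j, Measurable (g j))
    (a : κ → ι) (k₀ : κ) (hk₀ : ∀ k, a k = a k₀ → k = k₀)
    (hmean : ∫ ω, g (a k₀) ω ∂μ = 0) :
    ∫ ω, ∏ k, g (a k) ω ∂μ = 0 := by
  classical
  set T := (Finset.univ.erase k₀).image a
  have hdisj : Disjoint {a k₀} T := by
    simp only [Finset.disjoint_singleton_left, T, Finset.mem_image, Finset.mem_erase]
    rintro ⟨k, ⟨hk, -⟩, hak⟩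
    exact hk (hk₀ k hak)
  have hind : IndepFun (g (a k₀))
      (fun ω => ∏ k ∈ (Finset.univ.erase k₀).attach, g (a k) ω) μ :=
    (hg.indepFun_finset _ _ hdisj hmeas).comp
      (φ := fun x : ({a k₀} : Finset ι) → ℝ => x ⟨a k₀, Finset.mem_singleton_self _⟩)
      (ψ := fun x : T → ℝ => ∏ k ∈ (Finset.univ.erase k₀).attach,
        x ⟨a k, Finset.mem_image_of_mem a k.2⟩)
      (measurable_pi_apply _) (Finset.measurable_prod _ fun k _ => measurable_pi_apply _)
  have hsplit : ∀ ω, ∏ k, g (a k) ω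
      = g (a k₀) ω * ∏ k ∈ (Finset.univ.erase k₀).attach, g (a k) ω := fun ω => by
    rw [Finset.prod_attach _ fun k => g (a k) ω,
      Finset.mul_prod_erase _ (fun k => g (a k) ω) (Finset.mem_univ k₀)]
  simp_rw [hsplit]
  rw [hind.integral_fun_mul_eq_mul_integral (by fun_prop) (by fun_prop)]
  exact mul_eq_zero_of_left hmean _

lemma integrable_prod_of_ae_abs_le_one [IsFiniteMeasure μ] {κ : Type*} (s : Finset κ)
    {f : κ → Ω → ℝ} (hf : ∀ k, Measurable (f k)) (hbound : ∀ k, ∀ᵐ ω ∂μ, |f k ω| ≤ 1) :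
    Integrable (fun ω => ∏ k ∈ s, f k ω) μ := by
  refine Integrable.of_bound (Finset.measurable_prod s fun k _ => hf k).aestronglyMeasurable 1 ?_
  filter_upwards [(Filter.eventually_all_finset s).2 fun k _ => hbound k] with ω hω
  rw [norm_prod]
  exact Finset.prod_le_one (fun _ _ => norm_nonneg _) hω

end Products

section TensorTrain

variable {Ω : Type*} [MeasurableSpace Ω] {N R : ℕ} {d : Fin N → ℕ}

abbrev TTCoreIndex (N R : ℕ) (d : Fin N → ℕ) : Type :=
  Σ n : Fin N, Fin (ttRk N R n.castSucc) × Fin (d n) × Fin (ttRk N R n.succ)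

def ttSite (i : (n : Fin N) → Fin (d n)) (p : (k : Fin (N + 1)) → Fin (ttRk N R k))
    (n : Fin N) : TTCoreIndex N R d :=
  ⟨n, p n.castSucc, i n, p n.succ⟩

def ttCores
    (G : (n : Fin N) → Fin (ttRk N R n.castSucc) → Fin (d n) → Fin (ttRk N R n.succ) → Ω → ℝ)
    (j : TTCoreIndex N R d) : Ω → ℝ :=
  G j.1 j.2.1 j.2.2.1 j.2.2.2

lemma ttChain_mul_ttChain
    (G : (n : Fin N) → Fin (ttRk N R n.castSucc) → Fin (d n) → Fin (ttRk N R n.succ) → Ω → ℝ)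
    (i i' : (n : Fin N) → Fin (d n)) (ω : Ω) :
    ttChain G i ω * ttChain G i' ω =
      ∑ p, ∑ q, ∏ k, ttCores G (Sum.elim (ttSite i p) (ttSite i' q) k) ω := by
  rw [ttChain, ttChain, Finset.sum_mul_sum]
  simp only [Fintype.prod_sum_type, Sum.elim_inl, Sum.elim_inr]
  rfl

lemma eq_inl_of_sumElim_ttSite_eq {i i' : (n : Fin N) → Fin (d n)} {m : Fin N} (hm : i m ≠ i' m)
    (p q : (k : Fin (N + 1)) → Fin (ttRk N R k)) (k : Fin N ⊕ Fin N)
    (hk : Sum.elim (ttSite i p) (ttSite i' q) k = ttSite i p m) : k = Sum.inl m := by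
  rcases k with n | n
  all_goals
    obtain rfl : n = m := congrArg Sigma.fst hk
  · rfl
  · simp [ttSite, hm.symm] at hk

end TensorTrain

/-- Distinct entries of a TT-Rademacher distributed tensor of rank
parameter `R` are uncorrelated: `E[T[i₁,…,i_N] · T[i₁',…,i_N']] = 0` whenever the
multi-indices are distinct. -/
theorem tt_entries_uncorrelated
    {Ω : Type*} [MeasurableSpace Ω] (μ : Measure Ω) [IsProbabilityMeasure μ]
    (N R : ℕ) (d : Fin N → ℕ)
    (G : (n : Fin N) → Fin (ttRk N R n.castSucc) → Fin (d n) → Fin (ttRk N R n.succ) → Ω → ℝ)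
    (hmeas : ∀ n a i b, Measurable (G n a i b))
    (hlaw : ∀ n a i b, μ.map (G n a i b) = rademacherLaw)
    (hindep : iIndepFun
      (fun p : Σ n : Fin N, Fin (ttRk N R n.castSucc) × Fin (d n) × Fin (ttRk N R n.succ) =>
        G p.1 p.2.1 p.2.2.1 p.2.2.2) μ)
    (i i' : (n : Fin N) → Fin (d n)) (hii' : i ≠ i') :
    ∫ ω, ttEntry G i ω * ttEntry G i' ω ∂μ = 0 := by
  obtain ⟨m, hm⟩ := Function.ne_iff.mp hii'
  have hcores_meas : ∀ j, Measurable (ttCores G j) := fun j => hmeas _ _ _ _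
  have hterm_int : ∀ p q,
      Integrable (fun ω => ∏ k, ttCores G (Sum.elim (ttSite i p) (ttSite i' q) k) ω) μ :=
    fun p q => integrable_prod_of_ae_abs_le_one _ (fun _ => hcores_meas _)
      fun _ => ae_abs_le_one_of_map_eq_rademacherLaw (hcores_meas _) (hlaw _ _ _ _)
  have hterm : ∀ p q,
      ∫ ω, ∏ k, ttCores G (Sum.elim (ttSite i p) (ttSite i' q) k) ω ∂μ = 0 :=
    fun p q => iIndepFun.integral_prod_eq_zero_of_unique_index hindep hcores_meas _ (.inl m)
      (eq_inl_of_sumElim_ttSite_eq hm p q)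
      (integral_eq_zero_of_map_eq_rademacherLaw (hmeas _ _ _ _) (hlaw _ _ _ _))
  simp_rw [ttEntry, mul_mul_mul_comm _ (ttChain G i _), ttChain_mul_ttChain]
  rw [integral_const_mul, integral_finsetSum _ fun p _ => integrable_finsetSum _ fun q _ =>
    hterm_int p q]
  refine mul_eq_zero_of_right _ (Finset.sum_eq_zero fun p _ => ?_)
  rw [integral_finsetSum _ fun q _ => hterm_int p q]
  exact Finset.sum_eq_zero fun q _ => hterm p q
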